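/- For the strong-constraint solution ∂̃ = π∂ of Double Field Theory, the gauge algebra closes on doubled vectors via the C-bracket: for doubled vectors V, W, U with smooth components on ℝ^n (with π a constant antisymmetric n×n matrix and ∂̃^i := Σ_j π^{ij} ∂_j), the commutator of generalized Lie derivatives satisfies, in both upper and lower index positions, (𝓛_V 𝓛_W U − 𝓛_W 𝓛_V U)_K = (𝓛_{[V,W]_C} U)_K and (𝓛_V 𝓛_W U − 𝓛_W 𝓛_V U)^K = (𝓛_{[V,W]_C} U)^K. -/

import Mathlib

/-- Partial derivative in the `i`-th coordinate direction on `ℝ^n`. -/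
noncomputable def pd {n : ℕ} (i : Fin n) (f : (Fin n → ℝ) → ℝ) : (Fin n → ℝ) → ℝ :=
  fun x => fderiv ℝ f x (Pi.single i 1)

/-- The winding derivative `∂̃^i f := Σ_j π^{ij} ∂_j f` (strong-constraint solution
`∂̃ = π∂`). -/
noncomputable def tpd {n : ℕ} (π : Fin n → Fin n → ℝ) (i : Fin n)
    (f : (Fin n → ℝ) → ℝ) : (Fin n → ℝ) → ℝ :=
  fun x => ∑ j : Fin n, π i j * pd j f x

/-- Doubled contraction `Σ_K V^K ∂_K f = Σ_i (V^i ∂_i f + V_i ∂̃^i f)`. -/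
noncomputable def dirDer {n : ℕ} (π : Fin n → Fin n → ℝ)
    (Vup Vlo : Fin n → (Fin n → ℝ) → ℝ) (f : (Fin n → ℝ) → ℝ) (x : Fin n → ℝ) : ℝ :=
  ∑ i : Fin n, (Vup i x * pd i f x + Vlo i x * tpd π i f x)

/-- Lower components of the generalized Lie derivative:
`(𝓛_V W)_i = Σ_P V^P ∂_P W_i + Σ_j [(∂_i V^j − ∂̃^j V_i) W_j + (∂_i V_j − ∂_j V_i) W^j]`. -/
noncomputable def genLieLo {n : ℕ} (π : Fin n → Fin n → ℝ)
    (Vup Vlo Wup Wlo : Fin n → (Fin n → ℝ) → ℝ) (i : Fin n) (x : Fin n → ℝ) : ℝ :=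
  dirDer π Vup Vlo (Wlo i) x
    + ∑ j : Fin n, ((pd i (Vup j) x - tpd π j (Vlo i) x) * Wlo j x
      + (pd i (Vlo j) x - pd j (Vlo i) x) * Wup j x)

/-- Upper components of the generalized Lie derivative:
`(𝓛_V W)^i = Σ_P V^P ∂_P W^i − Σ_j [(∂_j V^i − ∂̃^i V_j) W^j + (∂̃^j V^i − ∂̃^i V^j) W_j]`. -/
noncomputable def genLieUp {n : ℕ} (π : Fin n → Fin n → ℝ)
    (Vup Vlo Wup Wlo : Fin n → (Fin n → ℝ) → ℝ) (i : Fin n) (x : Fin n → ℝ) : ℝ :=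
  dirDer π Vup Vlo (Wup i) x
    - ∑ j : Fin n, ((pd j (Vup i) x - tpd π i (Vlo j) x) * Wup j x
      + (tpd π j (Vup i) x - tpd π i (Vup j) x) * Wlo j x)

/-- Upper components of the C-bracket. -/
noncomputable def cUp {n : ℕ} (π : Fin n → Fin n → ℝ)
    (Vup Vlo Wup Wlo : Fin n → (Fin n → ℝ) → ℝ) (i : Fin n) (x : Fin n → ℝ) : ℝ :=
  dirDer π Vup Vlo (Wup i) x - dirDer π Wup Wlo (Vup i) x
    - (1 / 2) * ∑ k : Fin n,
        (Vup k x * tpd π i (Wlo k) x + Vlo k x * tpd π i (Wup k) x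
          - Wup k x * tpd π i (Vlo k) x - Wlo k x * tpd π i (Vup k) x)

/-- Lower components of the C-bracket. -/
noncomputable def cLo {n : ℕ} (π : Fin n → Fin n → ℝ)
    (Vup Vlo Wup Wlo : Fin n → (Fin n → ℝ) → ℝ) (i : Fin n) (x : Fin n → ℝ) : ℝ :=
  dirDer π Vup Vlo (Wlo i) x - dirDer π Wup Wlo (Vlo i) x
    - (1 / 2) * ∑ k : Fin n,
        (Vup k x * pd i (Wlo k) x + Vlo k x * pd i (Wup k) x
          - Wup k x * pd i (Vlo k) x - Wlo k x * pd i (Vup k) x)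



section Aux
variable {n : ℕ}

lemma pd_contDiff {f : (Fin n → ℝ) → ℝ} (hf : ContDiff ℝ (⊤ : ℕ∞) f) (i : Fin n) :
    ContDiff ℝ (⊤ : ℕ∞) (pd i f) := by
  unfold pd
  exact (hf.fderiv_right (by simp)).clm_apply contDiff_const

lemma pd_mul {f g : (Fin n → ℝ) → ℝ} (hf : ContDiff ℝ (⊤ : ℕ∞) f) (hg : ContDiff ℝ (⊤ : ℕ∞) g)
    (i : Fin n) (x : Fin n → ℝ) :
    pd i (fun y => f y * g y) x = pd i f x * g x + f x * pd i g x := by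
  unfold pd
  rw [fderiv_fun_mul (hf.differentiable (by simp) x) (hg.differentiable (by simp) x)]
  simp; ring

lemma pd_comm {f : (Fin n → ℝ) → ℝ} (hf : ContDiff ℝ (⊤ : ℕ∞) f) (i j : Fin n) (x : Fin n → ℝ) :
    pd i (pd j f) x = pd j (pd i f) x := by
  unfold pd
  have h1 : ∀ (v y : Fin n → ℝ),
      fderiv ℝ (fun z => fderiv ℝ f z v) y
        = (fderiv ℝ (fderiv ℝ f) y).flip v := by
    intro v y
    have hd : DifferentiableAt ℝ (fderiv ℝ f) y :=
      ((hf.fderiv_right (m := (⊤ : ℕ∞)) (by simp)).differentiable (by simp)) y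
    rw [fderiv_clm_apply hd (differentiableAt_const v)]
    simp
  rw [h1, h1]
  have := second_derivative_symmetric (f' := fderiv ℝ f)
    (f'' := fderiv ℝ (fderiv ℝ f) x)
    (fun y => (hf.differentiable (by simp) y).hasFDerivAt)
    (((hf.fderiv_right (m := (⊤ : ℕ∞)) (by simp)).differentiable (by simp) x).hasFDerivAt)
    (Pi.single i 1) (Pi.single j 1)
  simpa using this

lemma pd_sum {ι : Type*} (s : Finset ι) (F : ι → (Fin n → ℝ) → ℝ)
    (hF : ∀ j ∈ s, ContDiff ℝ (⊤ : ℕ∞) (F j)) (i : Fin n) (x : Fin n → ℝ) :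
    pd i (fun y => ∑ j ∈ s, F j y) x = ∑ j ∈ s, pd i (F j) x := by
  unfold pd
  rw [fderiv_fun_sum (fun j hj => (hF j hj).differentiable (by simp) x)]
  simp

lemma pd_const_mul (c : ℝ) {f : (Fin n → ℝ) → ℝ} (hf : ContDiff ℝ (⊤ : ℕ∞) f)
    (i : Fin n) (x : Fin n → ℝ) :
    pd i (fun y => c * f y) x = c * pd i f x := by
  unfold pd
  rw [fderiv_const_mul (hf.differentiable (by simp) x)]
  simp

/-- doubled derivative -/
noncomputable def DD (π : Fin n → Fin n → ℝ) : Fin n ⊕ Fin n → ((Fin n → ℝ) → ℝ) → ((Fin n → ℝ) → ℝ)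
  | .inl i => pd i
  | .inr i => tpd π i

variable {π : Fin n → Fin n → ℝ}

lemma tpd_contDiff {f : (Fin n → ℝ) → ℝ} (hf : ContDiff ℝ (⊤ : ℕ∞) f) (i : Fin n) :
    ContDiff ℝ (⊤ : ℕ∞) (tpd π i f) := by
  unfold tpd
  exact ContDiff.sum fun j _ => contDiff_const.mul (pd_contDiff hf j)

lemma DD_contDiff {f : (Fin n → ℝ) → ℝ} (hf : ContDiff ℝ (⊤ : ℕ∞) f) (K : Fin n ⊕ Fin n) :
    ContDiff ℝ (⊤ : ℕ∞) (DD π K f) := by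
  cases K with
  | inl i => exact pd_contDiff hf i
  | inr i => exact tpd_contDiff hf i

lemma DD_mul {f g : (Fin n → ℝ) → ℝ} (hf : ContDiff ℝ (⊤ : ℕ∞) f) (hg : ContDiff ℝ (⊤ : ℕ∞) g)
    (K : Fin n ⊕ Fin n) (x : Fin n → ℝ) :
    DD π K (fun y => f y * g y) x = DD π K f x * g x + f x * DD π K g x := by
  cases K with
  | inl i => exact pd_mul hf hg i x
  | inr i =>
    show tpd π i _ x = tpd π i f x * g x + f x * tpd π i g x
    simp only [tpd, pd_mul hf hg, mul_add, Finset.sum_add_distrib, Finset.sum_mul,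
      Finset.mul_sum]
    congr 1 <;> exact Finset.sum_congr rfl fun j _ => by ring

lemma DD_sum {ι : Type} (s : Finset ι) (F : ι → (Fin n → ℝ) → ℝ)
    (hF : ∀ j ∈ s, ContDiff ℝ (⊤ : ℕ∞) (F j)) (K : Fin n ⊕ Fin n) (x : Fin n → ℝ) :
    DD π K (fun y => ∑ j ∈ s, F j y) x = ∑ j ∈ s, DD π K (F j) x := by
  cases K with
  | inl i => exact pd_sum s F hF i x
  | inr i =>
    show tpd π i _ x = _
    simp only [tpd, pd_sum s F hF, Finset.mul_sum]
    rw [Finset.sum_comm]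
    rfl

lemma DD_const_mul (c : ℝ) {f : (Fin n → ℝ) → ℝ} (hf : ContDiff ℝ (⊤ : ℕ∞) f)
    (K : Fin n ⊕ Fin n) (x : Fin n → ℝ) :
    DD π K (fun y => c * f y) x = c * DD π K f x := by
  cases K with
  | inl i => exact pd_const_mul c hf i x
  | inr i =>
    show tpd π i _ x = c * tpd π i f x
    simp only [tpd, pd_const_mul c hf, Finset.mul_sum]
    exact Finset.sum_congr rfl fun j _ => by ring

lemma DD_comm {f : (Fin n → ℝ) → ℝ} (hf : ContDiff ℝ (⊤ : ℕ∞) f)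
    (K L : Fin n ⊕ Fin n) (x : Fin n → ℝ) :
    DD π K (DD π L f) x = DD π L (DD π K f) x := by
  have key : ∀ (i j : Fin n) (y : Fin n → ℝ), pd i (tpd π j f) y = tpd π j (pd i f) y := by
    intro i j y
    show pd i (fun z => ∑ k : Fin n, π j k * pd k f z) y = _
    rw [pd_sum Finset.univ _ (fun k _ => contDiff_const.mul (pd_contDiff hf k)) i y]
    simp only [tpd]
    exact Finset.sum_congr rfl fun k _ => by
      rw [pd_const_mul _ (pd_contDiff hf k), pd_comm hf i k y]
  cases K with
  | inl i =>
    cases L with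
    | inl j => exact pd_comm hf i j x
    | inr j => exact key i j x
  | inr i =>
    cases L with
    | inl j => exact (key j i x).symm
    | inr j =>
      show tpd π i (tpd π j f) x = tpd π j (tpd π i f) x
      have e : ∀ a b : Fin n, tpd π a (tpd π b f) x
          = ∑ k : Fin n, ∑ l : Fin n, π a k * (π b l * pd l (pd k f) x) := by
        intro a b
        show (∑ k : Fin n, π a k * pd k (tpd π b f) x) = _
        refine Finset.sum_congr rfl fun k _ => ?_
        rw [key k b x]
        show π a k * (∑ l : Fin n, π b l * pd l (pd k f) x) = _
        rw [Finset.mul_sum]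
      rw [e i j, e j i, Finset.sum_comm]
      refine Finset.sum_congr rfl fun a _ => Finset.sum_congr rfl fun b _ => ?_
      rw [pd_comm hf b a x]; ring

/-- strong constraint -/
lemma sc {f g : (Fin n → ℝ) → ℝ} (hanti : ∀ i j, π i j = - π j i)
    (hf : ContDiff ℝ (⊤ : ℕ∞) f) (hg : ContDiff ℝ (⊤ : ℕ∞) g) (x : Fin n → ℝ) :
    ∑ Q : Fin n ⊕ Fin n, DD π Q f x * DD π Q.swap g x = 0 := by
  rw [Fintype.sum_sum_type]
  simp only [Sum.swap_inl, Sum.swap_inr]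
  show (∑ i : Fin n, pd i f x * tpd π i g x) + (∑ i : Fin n, tpd π i f x * pd i g x) = 0
  simp only [tpd, Finset.mul_sum, Finset.sum_mul]
  rw [← Finset.sum_add_distrib]
  have : ∀ i : Fin n, (∑ j : Fin n, pd i f x * (π i j * pd j g x))
      + (∑ j : Fin n, π i j * pd j f x * pd i g x)
      = ∑ j : Fin n, π i j * (pd i f x * pd j g x + pd j f x * pd i g x) := by
    intro i
    rw [← Finset.sum_add_distrib]
    exact Finset.sum_congr rfl fun j _ => by ring
  rw [Finset.sum_congr rfl fun i _ => this i]
  have h2 : ∑ i : Fin n, ∑ j : Fin n, π i j * (pd i f x * pd j g x + pd j f x * pd i g x)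
      = - ∑ i : Fin n, ∑ j : Fin n, π i j * (pd i f x * pd j g x + pd j f x * pd i g x) := by
    conv_lhs => rw [Finset.sum_comm]
    rw [← Finset.sum_neg_distrib]
    refine Finset.sum_congr rfl fun i _ => ?_
    rw [← Finset.sum_neg_distrib]
    refine Finset.sum_congr rfl fun j _ => ?_
    rw [hanti j i]; ring
  linarith [h2]

lemma pd_add {f g : (Fin n → ℝ) → ℝ} (hf : ContDiff ℝ (⊤ : ℕ∞) f) (hg : ContDiff ℝ (⊤ : ℕ∞) g)
    (i : Fin n) (x : Fin n → ℝ) :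
    pd i (fun y => f y + g y) x = pd i f x + pd i g x := by
  unfold pd
  rw [fderiv_fun_add (hf.differentiable (by simp) x) (hg.differentiable (by simp) x)]
  simp

lemma pd_sub {f g : (Fin n → ℝ) → ℝ} (hf : ContDiff ℝ (⊤ : ℕ∞) f) (hg : ContDiff ℝ (⊤ : ℕ∞) g)
    (i : Fin n) (x : Fin n → ℝ) :
    pd i (fun y => f y - g y) x = pd i f x - pd i g x := by
  unfold pd
  rw [fderiv_fun_sub (hf.differentiable (by simp) x) (hg.differentiable (by simp) x)]
  simp

lemma DD_add {f g : (Fin n → ℝ) → ℝ} (hf : ContDiff ℝ (⊤ : ℕ∞) f) (hg : ContDiff ℝ (⊤ : ℕ∞) g)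
    (K : Fin n ⊕ Fin n) (x : Fin n → ℝ) :
    DD π K (fun y => f y + g y) x = DD π K f x + DD π K g x := by
  cases K with
  | inl i => exact pd_add hf hg i x
  | inr i =>
    show tpd π i _ x = tpd π i f x + tpd π i g x
    simp only [tpd, pd_add hf hg, mul_add, Finset.sum_add_distrib]

lemma DD_sub {f g : (Fin n → ℝ) → ℝ} (hf : ContDiff ℝ (⊤ : ℕ∞) f) (hg : ContDiff ℝ (⊤ : ℕ∞) g)
    (K : Fin n ⊕ Fin n) (x : Fin n → ℝ) :
    DD π K (fun y => f y - g y) x = DD π K f x - DD π K g x := by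
  cases K with
  | inl i => exact pd_sub hf hg i x
  | inr i =>
    show tpd π i _ x = tpd π i f x - tpd π i g x
    simp only [tpd, pd_sub hf hg, mul_sub, Finset.sum_sub_distrib]

/-- doubled directional derivative -/
noncomputable def dirD (π : Fin n → Fin n → ℝ) (V : Fin n ⊕ Fin n → (Fin n → ℝ) → ℝ)
    (f : (Fin n → ℝ) → ℝ) : (Fin n → ℝ) → ℝ :=
  fun x => ∑ P : Fin n ⊕ Fin n, V P x * DD π P f x

/-- doubled generalized Lie derivative -/
noncomputable def LgLie (π : Fin n → Fin n → ℝ) (V U : Fin n ⊕ Fin n → (Fin n → ℝ) → ℝ)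
    (K : Fin n ⊕ Fin n) : (Fin n → ℝ) → ℝ :=
  fun x => dirD π V (U K) x
    + ∑ P : Fin n ⊕ Fin n, (DD π K.swap (V P) x - DD π P.swap (V K) x) * U P.swap x

/-- doubled C-bracket -/
noncomputable def CbB (π : Fin n → Fin n → ℝ) (V W : Fin n ⊕ Fin n → (Fin n → ℝ) → ℝ)
    (K : Fin n ⊕ Fin n) : (Fin n → ℝ) → ℝ :=
  fun x => dirD π V (W K) x - dirD π W (V K) x
    - (1 / 2) * ∑ P : Fin n ⊕ Fin n,
        (V P x * DD π K.swap (W P.swap) x - W P x * DD π K.swap (V P.swap) x)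

lemma dirD_contDiff {V : Fin n ⊕ Fin n → (Fin n → ℝ) → ℝ} {f : (Fin n → ℝ) → ℝ}
    (hV : ∀ K, ContDiff ℝ (⊤ : ℕ∞) (V K)) (hf : ContDiff ℝ (⊤ : ℕ∞) f) :
    ContDiff ℝ (⊤ : ℕ∞) (dirD π V f) :=
  ContDiff.sum fun P _ => (hV P).mul (DD_contDiff hf P)

lemma LgLie_contDiff {V U : Fin n ⊕ Fin n → (Fin n → ℝ) → ℝ}
    (hV : ∀ K, ContDiff ℝ (⊤ : ℕ∞) (V K)) (hU : ∀ K, ContDiff ℝ (⊤ : ℕ∞) (U K)) (K : Fin n ⊕ Fin n) :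
    ContDiff ℝ (⊤ : ℕ∞) (LgLie π V U K) := by
  refine (dirD_contDiff hV (hU K)).add (ContDiff.sum fun P _ => ?_)
  exact ((DD_contDiff (hV P) _).sub (DD_contDiff (hV K) _)).mul (hU P.swap)

lemma CbB_contDiff {V W : Fin n ⊕ Fin n → (Fin n → ℝ) → ℝ}
    (hV : ∀ K, ContDiff ℝ (⊤ : ℕ∞) (V K)) (hW : ∀ K, ContDiff ℝ (⊤ : ℕ∞) (W K)) (K : Fin n ⊕ Fin n) :
    ContDiff ℝ (⊤ : ℕ∞) (CbB π V W K) := by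
  refine ((dirD_contDiff hV (hW K)).sub (dirD_contDiff hW (hV K))).sub
    (contDiff_const.mul (ContDiff.sum fun P _ => ?_))
  exact ((hV P).mul (DD_contDiff (hW P.swap) _)).sub ((hW P).mul (DD_contDiff (hV P.swap) _))

lemma DD_dirD {V : Fin n ⊕ Fin n → (Fin n → ℝ) → ℝ} {f : (Fin n → ℝ) → ℝ}
    (hV : ∀ K, ContDiff ℝ (⊤ : ℕ∞) (V K)) (hf : ContDiff ℝ (⊤ : ℕ∞) f) (Q : Fin n ⊕ Fin n)
    (x : Fin n → ℝ) :
    DD π Q (dirD π V f) x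
      = ∑ P : Fin n ⊕ Fin n, (DD π Q (V P) x * DD π P f x + V P x * DD π Q (DD π P f) x) := by
  show DD π Q (fun y => ∑ P : Fin n ⊕ Fin n, V P y * DD π P f y) x = _
  rw [DD_sum Finset.univ _ (fun P _ => (hV P).mul (DD_contDiff hf P)) Q x]
  exact Finset.sum_congr rfl fun P _ => DD_mul (hV P) (DD_contDiff hf P) Q x

lemma DD_LgLie {W U : Fin n ⊕ Fin n → (Fin n → ℝ) → ℝ}
    (hW : ∀ K, ContDiff ℝ (⊤ : ℕ∞) (W K)) (hU : ∀ K, ContDiff ℝ (⊤ : ℕ∞) (U K))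
    (Q K : Fin n ⊕ Fin n) (x : Fin n → ℝ) :
    DD π Q (LgLie π W U K) x
      = ∑ P : Fin n ⊕ Fin n,
          (DD π Q (W P) x * DD π P (U K) x + W P x * DD π Q (DD π P (U K)) x)
        + ∑ P : Fin n ⊕ Fin n,
          ((DD π Q (DD π K.swap (W P)) x - DD π Q (DD π P.swap (W K)) x) * U P.swap x
            + (DD π K.swap (W P) x - DD π P.swap (W K) x) * DD π Q (U P.swap) x) := by
  have h1 : LgLie π W U K = fun y => dirD π W (U K) y
      + ∑ P : Fin n ⊕ Fin n, (DD π K.swap (W P) y - DD π P.swap (W K) y) * U P.swap y := rfl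
  rw [h1, DD_add (dirD_contDiff hW (hU K))
    (ContDiff.sum fun P _ =>
      ((DD_contDiff (hW P) _).sub (DD_contDiff (hW K) _)).mul (hU P.swap)) Q x]
  rw [DD_dirD hW (hU K) Q x]
  congr 1
  rw [DD_sum Finset.univ _ (fun P _ =>
    ((DD_contDiff (hW P) _).sub (DD_contDiff (hW K) _)).mul (hU P.swap)) Q x]
  refine Finset.sum_congr rfl fun P _ => ?_
  rw [show (fun y => (DD π K.swap (W P) y - DD π P.swap (W K) y) * U P.swap y)
      = (fun y => (fun z => DD π K.swap (W P) z - DD π P.swap (W K) z) y * U P.swap y) from rfl]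
  rw [DD_mul ((DD_contDiff (hW P) _).sub (DD_contDiff (hW K) _)) (hU P.swap) Q x]
  rw [DD_sub (DD_contDiff (hW P) _) (DD_contDiff (hW K) _) Q x]

lemma DD_CbB {V W : Fin n ⊕ Fin n → (Fin n → ℝ) → ℝ}
    (hV : ∀ K, ContDiff ℝ (⊤ : ℕ∞) (V K)) (hW : ∀ K, ContDiff ℝ (⊤ : ℕ∞) (W K))
    (S K : Fin n ⊕ Fin n) (x : Fin n → ℝ) :
    DD π S (CbB π V W K) x
      = ∑ Q : Fin n ⊕ Fin n,
          (DD π S (V Q) x * DD π Q (W K) x + V Q x * DD π S (DD π Q (W K)) x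
            - DD π S (W Q) x * DD π Q (V K) x - W Q x * DD π S (DD π Q (V K)) x)
        - (1 / 2) * ∑ Q : Fin n ⊕ Fin n,
          (DD π S (V Q) x * DD π K.swap (W Q.swap) x
            + V Q x * DD π S (DD π K.swap (W Q.swap)) x
            - DD π S (W Q) x * DD π K.swap (V Q.swap) x
            - W Q x * DD π S (DD π K.swap (V Q.swap)) x) := by
  have h1 : CbB π V W K = fun y => (fun z => dirD π V (W K) z - dirD π W (V K) z) y
      - (fun z => (1 / 2) * ∑ P : Fin n ⊕ Fin n,
          (V P z * DD π K.swap (W P.swap) z - W P z * DD π K.swap (V P.swap) z)) y := rfl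
  have hsum : ContDiff ℝ (⊤ : ℕ∞) (fun z => ∑ P : Fin n ⊕ Fin n,
      (V P z * DD π K.swap (W P.swap) z - W P z * DD π K.swap (V P.swap) z)) :=
    ContDiff.sum fun P _ =>
      ((hV P).mul (DD_contDiff (hW P.swap) _)).sub ((hW P).mul (DD_contDiff (hV P.swap) _))
  rw [h1, DD_sub ((dirD_contDiff hV (hW K)).sub (dirD_contDiff hW (hV K)))
    (contDiff_const.mul hsum) S x]
  rw [show (fun z => dirD π V (W K) z - dirD π W (V K) z)
      = (fun z => (fun y => dirD π V (W K) y) z - (fun y => dirD π W (V K) y) z) from rfl]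
  rw [DD_sub (dirD_contDiff hV (hW K)) (dirD_contDiff hW (hV K)) S x]
  rw [DD_const_mul _ hsum S x]
  rw [DD_dirD hV (hW K) S x, DD_dirD hW (hV K) S x]
  rw [DD_sum Finset.univ _ (fun P _ =>
    ((hV P).mul (DD_contDiff (hW P.swap) _)).sub ((hW P).mul (DD_contDiff (hV P.swap) _))) S x]
  have perQ : ∀ Q : Fin n ⊕ Fin n,
      DD π S (fun z => V Q z * DD π K.swap (W Q.swap) z - W Q z * DD π K.swap (V Q.swap) z) x
        = DD π S (V Q) x * DD π K.swap (W Q.swap) x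
            + V Q x * DD π S (DD π K.swap (W Q.swap)) x
            - DD π S (W Q) x * DD π K.swap (V Q.swap) x
            - W Q x * DD π S (DD π K.swap (V Q.swap)) x := by
    intro Q
    rw [show (fun z => V Q z * DD π K.swap (W Q.swap) z - W Q z * DD π K.swap (V Q.swap) z)
        = (fun z => (fun y => V Q y * DD π K.swap (W Q.swap) y) z
            - (fun y => W Q y * DD π K.swap (V Q.swap) y) z) from rfl]
    rw [DD_sub ((hV Q).mul (DD_contDiff (hW Q.swap) _)) ((hW Q).mul (DD_contDiff (hV Q.swap) _)) S x]
    rw [DD_mul (hV Q) (DD_contDiff (hW Q.swap) _) S x,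
       DD_mul (hW Q) (DD_contDiff (hV Q.swap) _) S x]
    ring
  rw [Finset.sum_congr rfl fun Q _ => perQ Q, ← Finset.sum_sub_distrib]
  congr 1
  exact Finset.sum_congr rfl fun Q _ => by ring

open Finset in
lemma dft_core {ι : Type} [Fintype ι] (e : Equiv.Perm ι) (he : ∀ P, e (e P) = P)
    (v w u : ι → ℝ) (dv dw du : ι → ι → ℝ) (ddv ddw ddu : ι → ι → ι → ℝ)
    (hv : ∀ a b c, ddv a b c = ddv b a c)
    (hw : ∀ a b c, ddw a b c = ddw b a c)
    (hu : ∀ a b c, ddu a b c = ddu b a c)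
    (svw : ∀ A B, ∑ Q : ι, dv Q A * dw (e Q) B = 0)
    (svu : ∀ A B, ∑ Q : ι, dv Q A * du (e Q) B = 0)
    (swu : ∀ A B, ∑ Q : ι, dw Q A * du (e Q) B = 0)
    (K : ι) :
    ∑ P : ι, ∑ Q : ι,
      ((v Q * (dw Q P * du P K + w P * ddu Q P K)
        + v Q * ((ddw Q (e K) P - ddw Q (e P) K) * u (e P)
            + (dw (e K) P - dw (e P) K) * du Q (e P))
        + (dv (e K) P - dv (e P) K) * (w Q * du Q (e P))
        + (dv (e K) P - dv (e P) K) * ((dw P Q - dw (e Q) (e P)) * u (e Q)))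
      - (w Q * (dv Q P * du P K + v P * ddu Q P K)
        + w Q * ((ddv Q (e K) P - ddv Q (e P) K) * u (e P)
            + (dv (e K) P - dv (e P) K) * du Q (e P))
        + (dw (e K) P - dw (e P) K) * (v Q * du Q (e P))
        + (dw (e K) P - dw (e P) K) * ((dv P Q - dv (e Q) (e P)) * u (e Q))))
    = ∑ P : ι, ∑ Q : ι,
      ((v P * dw P Q - w P * dv P Q
          - (1 / 2) * (v P * dw (e Q) (e P) - w P * dv (e Q) (e P))) * du Q K
        + ((dv (e K) Q * dw Q P + v Q * ddw (e K) Q P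
              - dw (e K) Q * dv Q P - w Q * ddv (e K) Q P)
            - (1 / 2) * (dv (e K) Q * dw (e P) (e Q) + v Q * ddw (e K) (e P) (e Q)
                - dw (e K) Q * dv (e P) (e Q) - w Q * ddv (e K) (e P) (e Q))
            - (dv (e P) Q * dw Q K + v Q * ddw (e P) Q K
                - dw (e P) Q * dv Q K - w Q * ddv (e P) Q K)
            + (1 / 2) * (dv (e P) Q * dw (e K) (e Q) + v Q * ddw (e P) (e K) (e Q)
                - dw (e P) Q * dv (e K) (e Q) - w Q * ddv (e P) (e K) (e Q))) * u (e P)) := by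
  have resum : ∀ f : ι → ℝ, ∑ Q : ι, f (e Q) = ∑ Q : ι, f Q := fun f => Equiv.sum_comp e f
  -- derived strong-constraint variants
  have svw' : ∀ A B, ∑ Q : ι, dv (e Q) A * dw Q B = 0 := by
    intro A B
    calc ∑ Q : ι, dv (e Q) A * dw Q B
        = ∑ Q : ι, dv (e (e Q)) A * dw (e Q) B := (resum fun Q => dv (e Q) A * dw Q B).symm
      _ = ∑ Q : ι, dv Q A * dw (e Q) B := Finset.sum_congr rfl fun Q _ => by rw [he]
      _ = 0 := svw A B
  have svu' : ∀ A B, ∑ Q : ι, dv (e Q) A * du Q B = 0 := by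
    intro A B
    calc ∑ Q : ι, dv (e Q) A * du Q B
        = ∑ Q : ι, dv (e (e Q)) A * du (e Q) B := (resum fun Q => dv (e Q) A * du Q B).symm
      _ = ∑ Q : ι, dv Q A * du (e Q) B := Finset.sum_congr rfl fun Q _ => by rw [he]
      _ = 0 := svu A B
  have swu' : ∀ A B, ∑ Q : ι, dw (e Q) A * du Q B = 0 := by
    intro A B
    calc ∑ Q : ι, dw (e Q) A * du Q B
        = ∑ Q : ι, dw (e (e Q)) A * du (e Q) B := (resum fun Q => dw (e Q) A * du Q B).symm
      _ = ∑ Q : ι, dw Q A * du (e Q) B := Finset.sum_congr rfl fun Q _ => by rw [he]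
      _ = 0 := swu A B
  -- swap-with-congr helper
  have swzc : ∀ f g : ι → ι → ℝ, (∀ a b, f a b = g b a) →
      ∑ P : ι, ∑ Q : ι, (f P Q - g P Q) = 0 := by
    intro f g hfg
    simp only [Finset.sum_sub_distrib]
    rw [sub_eq_zero]
    calc ∑ P : ι, ∑ Q : ι, f P Q = ∑ Q : ι, ∑ P : ι, f P Q := Finset.sum_comm
      _ = ∑ P : ι, ∑ Q : ι, g P Q :=
          Finset.sum_congr rfl fun a _ => Finset.sum_congr rfl fun b _ => hfg b a
  -- the zero groups
  have z1 : ∑ P : ι, ∑ Q : ι,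
      (v Q * w P * ddu Q P K - v P * w Q * ddu Q P K) = 0 := by
    refine swzc _ _ fun a b => ?_
    rw [hu b a K]
  have z2 : ∑ P : ι, ∑ Q : ι,
      (v Q * dw Q P * du P K - v P * dw P Q * du Q K) = 0 := swzc _ _ fun a b => rfl
  have z3 : ∑ P : ι, ∑ Q : ι,
      (w P * dv P Q * du Q K - w Q * dv Q P * du P K) = 0 := swzc _ _ fun a b => rfl
  have z4 : ∑ P : ι, ∑ Q : ι,
      ((ddw Q (e K) P - ddw (e K) Q P) * (v Q * u (e P))) = 0 :=
    Finset.sum_eq_zero fun P _ => Finset.sum_eq_zero fun Q _ => by rw [hw Q (e K) P]; ring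
  have z5 : ∑ P : ι, ∑ Q : ι,
      ((ddw (e P) Q K - ddw Q (e P) K) * (v Q * u (e P))) = 0 :=
    Finset.sum_eq_zero fun P _ => Finset.sum_eq_zero fun Q _ => by rw [hw Q (e P) K]; ring
  have z6 : ∑ P : ι, ∑ Q : ι,
      ((ddv (e K) Q P - ddv Q (e K) P) * (w Q * u (e P))) = 0 :=
    Finset.sum_eq_zero fun P _ => Finset.sum_eq_zero fun Q _ => by rw [hv Q (e K) P]; ring
  have z7 : ∑ P : ι, ∑ Q : ι,
      ((ddv Q (e P) K - ddv (e P) Q K) * (w Q * u (e P))) = 0 :=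
    Finset.sum_eq_zero fun P _ => Finset.sum_eq_zero fun Q _ => by rw [hv Q (e P) K]; ring
  have z8 : ∑ P : ι, ∑ Q : ι,
      ((1 / 2 : ℝ) * ((ddw (e K) (e P) (e Q) - ddw (e P) (e K) (e Q)) * (v Q * u (e P)))) = 0 :=
    Finset.sum_eq_zero fun P _ => Finset.sum_eq_zero fun Q _ => by
      rw [hw (e K) (e P) (e Q)]; ring
  have z9 : ∑ P : ι, ∑ Q : ι,
      ((1 / 2 : ℝ) * ((ddv (e P) (e K) (e Q) - ddv (e K) (e P) (e Q)) * (w Q * u (e P)))) = 0 :=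
    Finset.sum_eq_zero fun P _ => Finset.sum_eq_zero fun Q _ => by
      rw [hv (e K) (e P) (e Q)]; ring
  have z10 : ∑ P : ι, ∑ Q : ι,
      (dv (e K) P * dw P Q * u (e Q) - dv (e K) Q * dw Q P * u (e P)) = 0 :=
    swzc _ _ fun a b => rfl
  have z11 : ∑ P : ι, ∑ Q : ι,
      (dw (e K) Q * dv Q P * u (e P) - dw (e K) P * dv P Q * u (e Q)) = 0 :=
    swzc _ _ fun a b => rfl
  have z12 : ∑ P : ι, ∑ Q : ι, ((1 / 2 : ℝ) * (v P * dw (e Q) (e P) * du Q K)) = 0 := by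
    refine Finset.sum_eq_zero fun P _ => ?_
    calc ∑ Q : ι, (1 / 2 : ℝ) * (v P * dw (e Q) (e P) * du Q K)
        = (1 / 2 : ℝ) * v P * ∑ Q : ι, dw (e Q) (e P) * du Q K := by
          rw [Finset.mul_sum]; exact Finset.sum_congr rfl fun Q _ => by ring
      _ = 0 := by rw [swu' (e P) K]; ring
  have z13 : ∑ P : ι, ∑ Q : ι, (-((1 / 2 : ℝ) * (w P * dv (e Q) (e P) * du Q K))) = 0 := by
    refine Finset.sum_eq_zero fun P _ => ?_
    calc ∑ Q : ι, -((1 / 2 : ℝ) * (w P * dv (e Q) (e P) * du Q K))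
        = (-(1 / 2 : ℝ)) * w P * ∑ Q : ι, dv (e Q) (e P) * du Q K := by
          rw [Finset.mul_sum]; exact Finset.sum_congr rfl fun Q _ => by ring
      _ = 0 := by rw [svu' (e P) K]; ring
  have z14 : ∑ P : ι, ∑ Q : ι, (-(dv (e P) K * dw P Q * u (e Q))) = 0 := by
    rw [show (∑ P : ι, ∑ Q : ι, (-(dv (e P) K * dw P Q * u (e Q))))
        = ∑ P : ι, ∑ Q : ι, (-(dv (e Q) K * dw Q P * u (e P))) from Finset.sum_comm]
    refine Finset.sum_eq_zero fun P _ => ?_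
    calc ∑ Q : ι, -(dv (e Q) K * dw Q P * u (e P))
        = (-(u (e P))) * ∑ Q : ι, dv (e Q) K * dw Q P := by
          rw [Finset.mul_sum]; exact Finset.sum_congr rfl fun Q _ => by ring
      _ = 0 := by rw [svw' K P]; ring
  have z15 : ∑ P : ι, ∑ Q : ι, (dw (e P) K * dv P Q * u (e Q)) = 0 := by
    rw [show (∑ P : ι, ∑ Q : ι, (dw (e P) K * dv P Q * u (e Q)))
        = ∑ P : ι, ∑ Q : ι, (dw (e Q) K * dv Q P * u (e P)) from Finset.sum_comm]
    refine Finset.sum_eq_zero fun P _ => ?_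
    have h : ∑ Q : ι, dv Q P * dw (e Q) K = 0 := svw P K
    calc ∑ Q : ι, dw (e Q) K * dv Q P * u (e P)
        = u (e P) * ∑ Q : ι, dv Q P * dw (e Q) K := by
          rw [Finset.mul_sum]; exact Finset.sum_congr rfl fun Q _ => by ring
      _ = 0 := by rw [h]; ring
  have z16 : ∑ P : ι, ∑ Q : ι,
      (dv (e P) K * dw (e Q) (e P) * u (e Q) - dw (e P) Q * dv Q K * u (e P)) = 0 := by
    simp only [Finset.sum_sub_distrib]
    rw [sub_eq_zero]
    calc ∑ P : ι, ∑ Q : ι, dv (e P) K * dw (e Q) (e P) * u (e Q)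
        = ∑ P : ι, ∑ Q : ι, dv (e Q) K * dw (e P) (e Q) * u (e P) := Finset.sum_comm
      _ = ∑ P : ι, ∑ Q : ι, dv (e (e Q)) K * dw (e P) (e (e Q)) * u (e P) :=
          Finset.sum_congr rfl fun P _ =>
            (resum fun Q => dv (e Q) K * dw (e P) (e Q) * u (e P)).symm
      _ = ∑ P : ι, ∑ Q : ι, dw (e P) Q * dv Q K * u (e P) :=
          Finset.sum_congr rfl fun P _ => Finset.sum_congr rfl fun Q _ => by rw [he]; ring
  have z17 : ∑ P : ι, ∑ Q : ι,
      (dv (e P) Q * dw Q K * u (e P) - dw (e P) K * dv (e Q) (e P) * u (e Q)) = 0 := by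
    simp only [Finset.sum_sub_distrib]
    rw [sub_eq_zero, eq_comm]
    calc ∑ P : ι, ∑ Q : ι, dw (e P) K * dv (e Q) (e P) * u (e Q)
        = ∑ P : ι, ∑ Q : ι, dw (e Q) K * dv (e P) (e Q) * u (e P) := Finset.sum_comm
      _ = ∑ P : ι, ∑ Q : ι, dw (e (e Q)) K * dv (e P) (e (e Q)) * u (e P) :=
          Finset.sum_congr rfl fun P _ =>
            (resum fun Q => dw (e Q) K * dv (e P) (e Q) * u (e P)).symm
      _ = ∑ P : ι, ∑ Q : ι, dv (e P) Q * dw Q K * u (e P) :=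
          Finset.sum_congr rfl fun P _ => Finset.sum_congr rfl fun Q _ => by rw [he]; ring
  have z18 : ∑ P : ι, ∑ Q : ι,
      (-(dv (e K) P * dw (e Q) (e P) * u (e Q))
        - -((1 / 2 : ℝ) * (dv (e K) Q * dw (e P) (e Q) * u (e P)))
        - -((1 / 2 : ℝ) * (dw (e P) Q * dv (e K) (e Q) * u (e P)))) = 0 := by
    have s1 : ∑ P : ι, ∑ Q : ι, dv (e K) P * dw (e Q) (e P) * u (e Q)
        = ∑ P : ι, ∑ Q : ι, dv (e K) Q * dw (e P) (e Q) * u (e P) := Finset.sum_comm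
    have s2 : ∑ P : ι, ∑ Q : ι, dw (e P) Q * dv (e K) (e Q) * u (e P)
        = ∑ P : ι, ∑ Q : ι, dv (e K) Q * dw (e P) (e Q) * u (e P) := by
      refine Finset.sum_congr rfl fun P _ => ?_
      calc ∑ Q : ι, dw (e P) Q * dv (e K) (e Q) * u (e P)
          = ∑ Q : ι, dw (e P) (e Q) * dv (e K) (e (e Q)) * u (e P) :=
            (resum fun Q => dw (e P) Q * dv (e K) (e Q) * u (e P)).symm
        _ = ∑ Q : ι, dv (e K) Q * dw (e P) (e Q) * u (e P) :=
            Finset.sum_congr rfl fun Q _ => by rw [he]; ring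
    simp only [Finset.sum_sub_distrib, Finset.sum_neg_distrib, ← Finset.mul_sum]
    rw [s1, s2]
    ring
  have z19 : ∑ P : ι, ∑ Q : ι,
      (dw (e K) P * dv (e Q) (e P) * u (e Q)
        - (1 / 2 : ℝ) * (dw (e K) Q * dv (e P) (e Q) * u (e P))
        - (1 / 2 : ℝ) * (dv (e P) Q * dw (e K) (e Q) * u (e P))) = 0 := by
    have s1 : ∑ P : ι, ∑ Q : ι, dw (e K) P * dv (e Q) (e P) * u (e Q)
        = ∑ P : ι, ∑ Q : ι, dw (e K) Q * dv (e P) (e Q) * u (e P) := Finset.sum_comm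
    have s2 : ∑ P : ι, ∑ Q : ι, dv (e P) Q * dw (e K) (e Q) * u (e P)
        = ∑ P : ι, ∑ Q : ι, dw (e K) Q * dv (e P) (e Q) * u (e P) := by
      refine Finset.sum_congr rfl fun P _ => ?_
      calc ∑ Q : ι, dv (e P) Q * dw (e K) (e Q) * u (e P)
          = ∑ Q : ι, dv (e P) (e Q) * dw (e K) (e (e Q)) * u (e P) :=
            (resum fun Q => dv (e P) Q * dw (e K) (e Q) * u (e P)).symm
        _ = ∑ Q : ι, dw (e K) Q * dv (e P) (e Q) * u (e P) :=
            Finset.sum_congr rfl fun Q _ => by rw [he]; ring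
    simp only [Finset.sum_sub_distrib, ← Finset.mul_sum]
    rw [s1, s2]
    ring
  -- assemble
  rw [← sub_eq_zero]
  simp only [← Finset.sum_sub_distrib]
  have hd : ∀ P Q : ι,
      ((v Q * (dw Q P * du P K + w P * ddu Q P K)
        + v Q * ((ddw Q (e K) P - ddw Q (e P) K) * u (e P)
            + (dw (e K) P - dw (e P) K) * du Q (e P))
        + (dv (e K) P - dv (e P) K) * (w Q * du Q (e P))
        + (dv (e K) P - dv (e P) K) * ((dw P Q - dw (e Q) (e P)) * u (e Q)))
      - (w Q * (dv Q P * du P K + v P * ddu Q P K)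
        + w Q * ((ddv Q (e K) P - ddv Q (e P) K) * u (e P)
            + (dv (e K) P - dv (e P) K) * du Q (e P))
        + (dw (e K) P - dw (e P) K) * (v Q * du Q (e P))
        + (dw (e K) P - dw (e P) K) * ((dv P Q - dv (e Q) (e P)) * u (e Q))))
      - ((v P * dw P Q - w P * dv P Q
          - (1 / 2) * (v P * dw (e Q) (e P) - w P * dv (e Q) (e P))) * du Q K
        + ((dv (e K) Q * dw Q P + v Q * ddw (e K) Q P
              - dw (e K) Q * dv Q P - w Q * ddv (e K) Q P)
            - (1 / 2) * (dv (e K) Q * dw (e P) (e Q) + v Q * ddw (e K) (e P) (e Q)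
                - dw (e K) Q * dv (e P) (e Q) - w Q * ddv (e K) (e P) (e Q))
            - (dv (e P) Q * dw Q K + v Q * ddw (e P) Q K
                - dw (e P) Q * dv Q K - w Q * ddv (e P) Q K)
            + (1 / 2) * (dv (e P) Q * dw (e K) (e Q) + v Q * ddw (e P) (e K) (e Q)
                - dw (e P) Q * dv (e K) (e Q) - w Q * ddv (e P) (e K) (e Q))) * u (e P))
      = (v Q * w P * ddu Q P K - v P * w Q * ddu Q P K)
        + (v Q * dw Q P * du P K - v P * dw P Q * du Q K)
        + (w P * dv P Q * du Q K - w Q * dv Q P * du P K)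
        + ((ddw Q (e K) P - ddw (e K) Q P) * (v Q * u (e P)))
        + ((ddw (e P) Q K - ddw Q (e P) K) * (v Q * u (e P)))
        + ((ddv (e K) Q P - ddv Q (e K) P) * (w Q * u (e P)))
        + ((ddv Q (e P) K - ddv (e P) Q K) * (w Q * u (e P)))
        + ((1 / 2 : ℝ) * ((ddw (e K) (e P) (e Q) - ddw (e P) (e K) (e Q)) * (v Q * u (e P))))
        + ((1 / 2 : ℝ) * ((ddv (e P) (e K) (e Q) - ddv (e K) (e P) (e Q)) * (w Q * u (e P))))
        + (dv (e K) P * dw P Q * u (e Q) - dv (e K) Q * dw Q P * u (e P))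
        + (dw (e K) Q * dv Q P * u (e P) - dw (e K) P * dv P Q * u (e Q))
        + ((1 / 2 : ℝ) * (v P * dw (e Q) (e P) * du Q K))
        + (-((1 / 2 : ℝ) * (w P * dv (e Q) (e P) * du Q K)))
        + (-(dv (e P) K * dw P Q * u (e Q)))
        + (dw (e P) K * dv P Q * u (e Q))
        + (dv (e P) K * dw (e Q) (e P) * u (e Q) - dw (e P) Q * dv Q K * u (e P))
        + (dv (e P) Q * dw Q K * u (e P) - dw (e P) K * dv (e Q) (e P) * u (e Q))
        + (-(dv (e K) P * dw (e Q) (e P) * u (e Q))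
            - -((1 / 2 : ℝ) * (dv (e K) Q * dw (e P) (e Q) * u (e P)))
            - -((1 / 2 : ℝ) * (dw (e P) Q * dv (e K) (e Q) * u (e P))))
        + (dw (e K) P * dv (e Q) (e P) * u (e Q)
            - (1 / 2 : ℝ) * (dw (e K) Q * dv (e P) (e Q) * u (e P))
            - (1 / 2 : ℝ) * (dv (e P) Q * dw (e K) (e Q) * u (e P))) := by
    intro P Q; ring
  rw [Finset.sum_congr rfl fun P _ => Finset.sum_congr rfl fun Q _ => hd P Q]
  simp only [Finset.sum_add_distrib]
  rw [z1, z2, z3, z4, z5, z6, z7, z8, z9, z10, z11, z12, z13, z14, z15, z16, z17, z18, z19]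
  norm_num

lemma LgLie_LgLie_expand {V W U : Fin n ⊕ Fin n → (Fin n → ℝ) → ℝ}
    (hW : ∀ K, ContDiff ℝ (⊤ : ℕ∞) (W K)) (hU : ∀ K, ContDiff ℝ (⊤ : ℕ∞) (U K))
    (K : Fin n ⊕ Fin n) (x : Fin n → ℝ) :
    LgLie π V (LgLie π W U) K x
      = ∑ P : Fin n ⊕ Fin n, ∑ Q : Fin n ⊕ Fin n,
          (V Q x * (DD π Q (W P) x * DD π P (U K) x + W P x * DD π Q (DD π P (U K)) x)
            + V Q x * ((DD π Q (DD π K.swap (W P)) x - DD π Q (DD π P.swap (W K)) x)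
                  * U P.swap x
                + (DD π K.swap (W P) x - DD π P.swap (W K) x) * DD π Q (U P.swap) x)
            + (DD π K.swap (V P) x - DD π P.swap (V K) x) * (W Q x * DD π Q (U P.swap) x)
            + (DD π K.swap (V P) x - DD π P.swap (V K) x)
                * ((DD π P (W Q) x - DD π Q.swap (W P.swap) x) * U Q.swap x)) := by
  have h1 : dirD π V (LgLie π W U K) x
      = ∑ P : Fin n ⊕ Fin n, ∑ Q : Fin n ⊕ Fin n,
          (V Q x * (DD π Q (W P) x * DD π P (U K) x + W P x * DD π Q (DD π P (U K)) x)
            + V Q x * ((DD π Q (DD π K.swap (W P)) x - DD π Q (DD π P.swap (W K)) x)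
                  * U P.swap x
                + (DD π K.swap (W P) x - DD π P.swap (W K) x) * DD π Q (U P.swap) x)) := by
    calc dirD π V (LgLie π W U K) x
        = ∑ Q : Fin n ⊕ Fin n, V Q x * DD π Q (LgLie π W U K) x := rfl
      _ = ∑ Q : Fin n ⊕ Fin n, ∑ P : Fin n ⊕ Fin n,
          (V Q x * (DD π Q (W P) x * DD π P (U K) x + W P x * DD π Q (DD π P (U K)) x)
            + V Q x * ((DD π Q (DD π K.swap (W P)) x - DD π Q (DD π P.swap (W K)) x)
                  * U P.swap x
                + (DD π K.swap (W P) x - DD π P.swap (W K) x) * DD π Q (U P.swap) x)) := by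
          refine Finset.sum_congr rfl fun Q _ => ?_
          rw [DD_LgLie hW hU Q K x, mul_add, Finset.mul_sum, Finset.mul_sum,
            ← Finset.sum_add_distrib]
      _ = _ := Finset.sum_comm
  have h2 : ∑ P : Fin n ⊕ Fin n,
        (DD π K.swap (V P) x - DD π P.swap (V K) x) * LgLie π W U P.swap x
      = ∑ P : Fin n ⊕ Fin n, ∑ Q : Fin n ⊕ Fin n,
          ((DD π K.swap (V P) x - DD π P.swap (V K) x) * (W Q x * DD π Q (U P.swap) x)
            + (DD π K.swap (V P) x - DD π P.swap (V K) x)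
                * ((DD π P (W Q) x - DD π Q.swap (W P.swap) x) * U Q.swap x)) := by
    refine Finset.sum_congr rfl fun P _ => ?_
    have h3 : LgLie π W U P.swap x
        = ∑ Q : Fin n ⊕ Fin n, W Q x * DD π Q (U P.swap) x
          + ∑ Q : Fin n ⊕ Fin n,
              (DD π P (W Q) x - DD π Q.swap (W P.swap) x) * U Q.swap x := by
      show dirD π W (U P.swap) x + _ = _
      simp only [Sum.swap_swap]
      rfl
    rw [h3, mul_add, Finset.mul_sum, Finset.mul_sum, ← Finset.sum_add_distrib]
  calc LgLie π V (LgLie π W U) K x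
      = dirD π V (LgLie π W U K) x
        + ∑ P : Fin n ⊕ Fin n,
            (DD π K.swap (V P) x - DD π P.swap (V K) x) * LgLie π W U P.swap x := rfl
    _ = _ := by
        rw [h1, h2]
        simp only [← Finset.sum_add_distrib]
        refine Finset.sum_congr rfl fun P _ => Finset.sum_congr rfl fun Q _ => by ring

lemma LgLie_CbB_expand {V W U : Fin n ⊕ Fin n → (Fin n → ℝ) → ℝ}
    (hV : ∀ K, ContDiff ℝ (⊤ : ℕ∞) (V K)) (hW : ∀ K, ContDiff ℝ (⊤ : ℕ∞) (W K))
    (K : Fin n ⊕ Fin n) (x : Fin n → ℝ) :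
    LgLie π (CbB π V W) U K x
      = ∑ P : Fin n ⊕ Fin n, ∑ Q : Fin n ⊕ Fin n,
        ((V P x * DD π P (W Q) x - W P x * DD π P (V Q) x
            - (1 / 2) * (V P x * DD π Q.swap (W P.swap) x
                - W P x * DD π Q.swap (V P.swap) x)) * DD π Q (U K) x
          + ((DD π K.swap (V Q) x * DD π Q (W P) x
                + V Q x * DD π K.swap (DD π Q (W P)) x
                - DD π K.swap (W Q) x * DD π Q (V P) x
                - W Q x * DD π K.swap (DD π Q (V P)) x)
              - (1 / 2) * (DD π K.swap (V Q) x * DD π P.swap (W Q.swap) x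
                  + V Q x * DD π K.swap (DD π P.swap (W Q.swap)) x
                  - DD π K.swap (W Q) x * DD π P.swap (V Q.swap) x
                  - W Q x * DD π K.swap (DD π P.swap (V Q.swap)) x)
              - (DD π P.swap (V Q) x * DD π Q (W K) x
                  + V Q x * DD π P.swap (DD π Q (W K)) x
                  - DD π P.swap (W Q) x * DD π Q (V K) x
                  - W Q x * DD π P.swap (DD π Q (V K)) x)
              + (1 / 2) * (DD π P.swap (V Q) x * DD π K.swap (W Q.swap) x
                  + V Q x * DD π P.swap (DD π K.swap (W Q.swap)) x
                  - DD π P.swap (W Q) x * DD π K.swap (V Q.swap) x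
                  - W Q x * DD π P.swap (DD π K.swap (V Q.swap)) x)) * U P.swap x) := by
  have h1 : dirD π (CbB π V W) (U K) x
      = ∑ P : Fin n ⊕ Fin n, ∑ Q : Fin n ⊕ Fin n,
          ((V P x * DD π P (W Q) x - W P x * DD π P (V Q) x
            - (1 / 2) * (V P x * DD π Q.swap (W P.swap) x
                - W P x * DD π Q.swap (V P.swap) x)) * DD π Q (U K) x) := by
    calc dirD π (CbB π V W) (U K) x
        = ∑ Q : Fin n ⊕ Fin n, CbB π V W Q x * DD π Q (U K) x := rfl
      _ = ∑ Q : Fin n ⊕ Fin n, ∑ P : Fin n ⊕ Fin n,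
          ((V P x * DD π P (W Q) x - W P x * DD π P (V Q) x
            - (1 / 2) * (V P x * DD π Q.swap (W P.swap) x
                - W P x * DD π Q.swap (V P.swap) x)) * DD π Q (U K) x) := by
          refine Finset.sum_congr rfl fun Q _ => ?_
          have hc : CbB π V W Q x
              = ∑ P : Fin n ⊕ Fin n,
                  (V P x * DD π P (W Q) x - W P x * DD π P (V Q) x
                    - (1 / 2) * (V P x * DD π Q.swap (W P.swap) x
                        - W P x * DD π Q.swap (V P.swap) x)) := by
            show dirD π V (W Q) x - dirD π W (V Q) x - (1 / 2) * _ = _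
            rw [Finset.mul_sum]
            show (∑ P : Fin n ⊕ Fin n, V P x * DD π P (W Q) x)
                - (∑ P : Fin n ⊕ Fin n, W P x * DD π P (V Q) x) - _ = _
            rw [← Finset.sum_sub_distrib, ← Finset.sum_sub_distrib]
          rw [hc, Finset.sum_mul]
      _ = _ := Finset.sum_comm
  have h2 : ∀ P : Fin n ⊕ Fin n,
      (DD π K.swap (CbB π V W P) x - DD π P.swap (CbB π V W K) x) * U P.swap x
      = ∑ Q : Fin n ⊕ Fin n,
          (((DD π K.swap (V Q) x * DD π Q (W P) x
                + V Q x * DD π K.swap (DD π Q (W P)) x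
                - DD π K.swap (W Q) x * DD π Q (V P) x
                - W Q x * DD π K.swap (DD π Q (V P)) x)
              - (1 / 2) * (DD π K.swap (V Q) x * DD π P.swap (W Q.swap) x
                  + V Q x * DD π K.swap (DD π P.swap (W Q.swap)) x
                  - DD π K.swap (W Q) x * DD π P.swap (V Q.swap) x
                  - W Q x * DD π K.swap (DD π P.swap (V Q.swap)) x)
              - (DD π P.swap (V Q) x * DD π Q (W K) x
                  + V Q x * DD π P.swap (DD π Q (W K)) x
                  - DD π P.swap (W Q) x * DD π Q (V K) x
                  - W Q x * DD π P.swap (DD π Q (V K)) x)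
              + (1 / 2) * (DD π P.swap (V Q) x * DD π K.swap (W Q.swap) x
                  + V Q x * DD π P.swap (DD π K.swap (W Q.swap)) x
                  - DD π P.swap (W Q) x * DD π K.swap (V Q.swap) x
                  - W Q x * DD π P.swap (DD π K.swap (V Q.swap)) x)) * U P.swap x) := by
    intro P
    rw [DD_CbB hV hW K.swap P x, DD_CbB hV hW P.swap K x]
    rw [Finset.mul_sum, Finset.mul_sum]
    rw [show ∀ A B C D : ℝ, A - B - (C - D) = A - B - C + D from fun A B C D => by ring]
    rw [← Finset.sum_sub_distrib, ← Finset.sum_sub_distrib, ← Finset.sum_add_distrib]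
    rw [Finset.sum_mul]
  calc LgLie π (CbB π V W) U K x
      = dirD π (CbB π V W) (U K) x
        + ∑ P : Fin n ⊕ Fin n,
            (DD π K.swap (CbB π V W P) x - DD π P.swap (CbB π V W K) x) * U P.swap x := rfl
    _ = _ := by
        rw [h1, Finset.sum_congr rfl fun P _ => h2 P]
        simp only [← Finset.sum_add_distrib]

lemma key_closure (hanti : ∀ i j, π i j = - π j i)
    {V W U : Fin n ⊕ Fin n → (Fin n → ℝ) → ℝ}
    (hV : ∀ K, ContDiff ℝ (⊤ : ℕ∞) (V K)) (hW : ∀ K, ContDiff ℝ (⊤ : ℕ∞) (W K))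
    (hU : ∀ K, ContDiff ℝ (⊤ : ℕ∞) (U K)) (K : Fin n ⊕ Fin n) (x : Fin n → ℝ) :
    LgLie π V (LgLie π W U) K x - LgLie π W (LgLie π V U) K x
      = LgLie π (CbB π V W) U K x := by
  have he : ∀ P : Fin n ⊕ Fin n, (Equiv.sumComm (Fin n) (Fin n))
      ((Equiv.sumComm (Fin n) (Fin n)) P) = P := by
    intro P; simp
  have hcore := dft_core (Equiv.sumComm (Fin n) (Fin n)) he
    (fun P => V P x) (fun P => W P x) (fun P => U P x)
    (fun Q R => DD π Q (V R) x) (fun Q R => DD π Q (W R) x) (fun Q R => DD π Q (U R) x)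
    (fun a b c => DD π a (DD π b (V c)) x) (fun a b c => DD π a (DD π b (W c)) x)
    (fun a b c => DD π a (DD π b (U c)) x)
    (fun a b c => DD_comm (hV c) a b x) (fun a b c => DD_comm (hW c) a b x)
    (fun a b c => DD_comm (hU c) a b x)
    (fun A B => by simpa using sc hanti (hV A) (hW B) x)
    (fun A B => by simpa using sc hanti (hV A) (hU B) x)
    (fun A B => by simpa using sc hanti (hW A) (hU B) x)
    K
  simp only [Equiv.sumComm_apply] at hcore
  rw [LgLie_LgLie_expand hW hU K x, LgLie_LgLie_expand hV hU K x,
    LgLie_CbB_expand hV hW K x]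
  simp only [← Finset.sum_sub_distrib]
  exact hcore


lemma dirD_eq (Vup Vlo : Fin n → (Fin n → ℝ) → ℝ) (f : (Fin n → ℝ) → ℝ) (x : Fin n → ℝ) :
    dirD π (Sum.elim Vup Vlo) f x = dirDer π Vup Vlo f x := by
  show ∑ P : Fin n ⊕ Fin n, Sum.elim Vup Vlo P x * DD π P f x = _
  rw [Fintype.sum_sum_type, ← Finset.sum_add_distrib]
  rfl

lemma genLieUp_eq (Vup Vlo Wup Wlo : Fin n → (Fin n → ℝ) → ℝ) (i : Fin n) (x : Fin n → ℝ) :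
    genLieUp π Vup Vlo Wup Wlo i x
      = LgLie π (Sum.elim Vup Vlo) (Sum.elim Wup Wlo) (.inl i) x := by
  show _ = dirD π (Sum.elim Vup Vlo) (Wup i) x + ∑ P : Fin n ⊕ Fin n, _
  rw [dirD_eq, Fintype.sum_sum_type]
  show genLieUp π Vup Vlo Wup Wlo i x = dirDer π Vup Vlo (Wup i) x
    + ((∑ j : Fin n, (tpd π i (Vup j) x - tpd π j (Vup i) x) * Wlo j x)
      + ∑ j : Fin n, (tpd π i (Vlo j) x - pd j (Vup i) x) * Wup j x)
  unfold genLieUp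
  rw [sub_eq_add_neg, ← Finset.sum_neg_distrib, ← Finset.sum_add_distrib]
  congr 1
  exact Finset.sum_congr rfl fun j _ => by ring

lemma genLieLo_eq (Vup Vlo Wup Wlo : Fin n → (Fin n → ℝ) → ℝ) (i : Fin n) (x : Fin n → ℝ) :
    genLieLo π Vup Vlo Wup Wlo i x
      = LgLie π (Sum.elim Vup Vlo) (Sum.elim Wup Wlo) (.inr i) x := by
  show _ = dirD π (Sum.elim Vup Vlo) (Wlo i) x + ∑ P : Fin n ⊕ Fin n, _
  rw [dirD_eq, Fintype.sum_sum_type]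
  show genLieLo π Vup Vlo Wup Wlo i x = dirDer π Vup Vlo (Wlo i) x
    + ((∑ j : Fin n, (pd i (Vup j) x - tpd π j (Vlo i) x) * Wlo j x)
      + ∑ j : Fin n, (pd i (Vlo j) x - pd j (Vlo i) x) * Wup j x)
  unfold genLieLo
  rw [← Finset.sum_add_distrib]

lemma cUp_eq (Vup Vlo Wup Wlo : Fin n → (Fin n → ℝ) → ℝ) (i : Fin n) (x : Fin n → ℝ) :
    cUp π Vup Vlo Wup Wlo i x
      = CbB π (Sum.elim Vup Vlo) (Sum.elim Wup Wlo) (.inl i) x := by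
  show _ = dirD π (Sum.elim Vup Vlo) (Wup i) x - dirD π (Sum.elim Wup Wlo) (Vup i) x
    - (1 / 2) * ∑ P : Fin n ⊕ Fin n, _
  rw [dirD_eq, dirD_eq, Fintype.sum_sum_type]
  show cUp π Vup Vlo Wup Wlo i x = dirDer π Vup Vlo (Wup i) x - dirDer π Wup Wlo (Vup i) x
    - (1 / 2) * ((∑ k : Fin n, (Vup k x * tpd π i (Wlo k) x - Wup k x * tpd π i (Vlo k) x))
      + ∑ k : Fin n, (Vlo k x * tpd π i (Wup k) x - Wlo k x * tpd π i (Vup k) x))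
  unfold cUp
  rw [← Finset.sum_add_distrib]
  congr 2
  exact Finset.sum_congr rfl fun k _ => by ring

lemma cLo_eq (Vup Vlo Wup Wlo : Fin n → (Fin n → ℝ) → ℝ) (i : Fin n) (x : Fin n → ℝ) :
    cLo π Vup Vlo Wup Wlo i x
      = CbB π (Sum.elim Vup Vlo) (Sum.elim Wup Wlo) (.inr i) x := by
  show _ = dirD π (Sum.elim Vup Vlo) (Wlo i) x - dirD π (Sum.elim Wup Wlo) (Vlo i) x
    - (1 / 2) * ∑ P : Fin n ⊕ Fin n, _
  rw [dirD_eq, dirD_eq, Fintype.sum_sum_type]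
  show cLo π Vup Vlo Wup Wlo i x = dirDer π Vup Vlo (Wlo i) x - dirDer π Wup Wlo (Vlo i) x
    - (1 / 2) * ((∑ k : Fin n, (Vup k x * pd i (Wlo k) x - Wup k x * pd i (Vlo k) x))
      + ∑ k : Fin n, (Vlo k x * pd i (Wup k) x - Wlo k x * pd i (Vup k) x))
  unfold cLo
  rw [← Finset.sum_add_distrib]
  congr 2
  exact Finset.sum_congr rfl fun k _ => by ring


end Aux

/-- For the strong-constraint solution `∂̃ = π∂` of DFT, the gauge algebra closes on
doubled vectors via the C-bracket: in both index positions,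
`(𝓛_V 𝓛_W U − 𝓛_W 𝓛_V U)_K = (𝓛_{[V,W]_C} U)_K` and
`(𝓛_V 𝓛_W U − 𝓛_W 𝓛_V U)^K = (𝓛_{[V,W]_C} U)^K`. -/
theorem gauge_closure_vector {n : ℕ} (π : Fin n → Fin n → ℝ)
    (hanti : ∀ i j, π i j = - π j i)
    (Vup Vlo Wup Wlo Uup Ulo : Fin n → (Fin n → ℝ) → ℝ)
    (hVup : ∀ i, ContDiff ℝ (⊤ : ℕ∞) (Vup i)) (hVlo : ∀ i, ContDiff ℝ (⊤ : ℕ∞) (Vlo i))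
    (hWup : ∀ i, ContDiff ℝ (⊤ : ℕ∞) (Wup i)) (hWlo : ∀ i, ContDiff ℝ (⊤ : ℕ∞) (Wlo i))
    (hUup : ∀ i, ContDiff ℝ (⊤ : ℕ∞) (Uup i)) (hUlo : ∀ i, ContDiff ℝ (⊤ : ℕ∞) (Ulo i)) :
    (∀ (i : Fin n) (x : Fin n → ℝ),
        genLieLo π Vup Vlo (genLieUp π Wup Wlo Uup Ulo) (genLieLo π Wup Wlo Uup Ulo) i x
          - genLieLo π Wup Wlo (genLieUp π Vup Vlo Uup Ulo) (genLieLo π Vup Vlo Uup Ulo) i x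
        = genLieLo π (cUp π Vup Vlo Wup Wlo) (cLo π Vup Vlo Wup Wlo) Uup Ulo i x) ∧
    (∀ (i : Fin n) (x : Fin n → ℝ),
        genLieUp π Vup Vlo (genLieUp π Wup Wlo Uup Ulo) (genLieLo π Wup Wlo Uup Ulo) i x
          - genLieUp π Wup Wlo (genLieUp π Vup Vlo Uup Ulo) (genLieLo π Vup Vlo Uup Ulo) i x
        = genLieUp π (cUp π Vup Vlo Wup Wlo) (cLo π Vup Vlo Wup Wlo) Uup Ulo i x) := by
  set V := Sum.elim Vup Vlo with hVdef
  set W := Sum.elim Wup Wlo with hWdef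
  set U := Sum.elim Uup Ulo with hUdef
  have hV : ∀ K, ContDiff ℝ (⊤ : ℕ∞) (V K) := by rintro (i | i) <;> [exact hVup i; exact hVlo i]
  have hW : ∀ K, ContDiff ℝ (⊤ : ℕ∞) (W K) := by rintro (i | i) <;> [exact hWup i; exact hWlo i]
  have hU : ∀ K, ContDiff ℝ (⊤ : ℕ∞) (U K) := by rintro (i | i) <;> [exact hUup i; exact hUlo i]
  have hLW : Sum.elim (genLieUp π Wup Wlo Uup Ulo) (genLieLo π Wup Wlo Uup Ulo)
      = LgLie π W U := by
    funext K; cases K with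
    | inl i => exact funext fun x => genLieUp_eq Wup Wlo Uup Ulo i x
    | inr i => exact funext fun x => genLieLo_eq Wup Wlo Uup Ulo i x
  have hLV : Sum.elim (genLieUp π Vup Vlo Uup Ulo) (genLieLo π Vup Vlo Uup Ulo)
      = LgLie π V U := by
    funext K; cases K with
    | inl i => exact funext fun x => genLieUp_eq Vup Vlo Uup Ulo i x
    | inr i => exact funext fun x => genLieLo_eq Vup Vlo Uup Ulo i x
  have hCb : Sum.elim (cUp π Vup Vlo Wup Wlo) (cLo π Vup Vlo Wup Wlo) = CbB π V W := by
    funext K; cases K with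
    | inl i => exact funext fun x => cUp_eq Vup Vlo Wup Wlo i x
    | inr i => exact funext fun x => cLo_eq Vup Vlo Wup Wlo i x
  constructor
  · intro i x
    rw [genLieLo_eq Vup Vlo _ _ i x, genLieLo_eq Wup Wlo _ _ i x,
      genLieLo_eq (cUp π Vup Vlo Wup Wlo) (cLo π Vup Vlo Wup Wlo) Uup Ulo i x,
      hLW, hLV, hCb]
    exact key_closure hanti hV hW hU (.inr i) x
  · intro i x
    rw [genLieUp_eq Vup Vlo _ _ i x, genLieUp_eq Wup Wlo _ _ i x,
      genLieUp_eq (cUp π Vup Vlo Wup Wlo) (cLo π Vup Vlo Wup Wlo) Uup Ulo i x,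
      hLW, hLV, hCb]
    exact key_closure hanti hV hW hU (.inl i) x
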